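/- Let Ω ⊆ ℝⁿ be a bounded open set, and let A, D ⊆ ℝⁿ be open sets with A nonempty, closure(A) ⊆ Ω and closure(Ω) ⊆ D, such that d := min(dist(A, ∂Ω), dist(∂D, ∂Ω)) > 0. Set T := D ∖ closure(A). Then for every measurable set E ⊆ ℝⁿ and every s ∈ (0,1), P_s^{NL}(E,Ω) ≤ 2 P_s^L(E,T) + 4 (n ω_n / s) |Ω| d^{−s}, where ω_n is the Lebesgue measure of the unit ball of ℝⁿ. -/

import Mathlib

open MeasureTheory Metric Set Filter Bornology
open scoped ENNReal Topology

/-- The fractional kernel `|x-y|^{-(n+s)}` as an extended nonnegative real. -/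
noncomputable def fracKer (n : ℕ) (s : ℝ) (x y : EuclideanSpace ℝ (Fin n)) : ℝ≥0∞ :=
  ENNReal.ofReal (‖x - y‖ ^ (-((n : ℝ) + s)))

/-- The interaction `L_s(A,B) = ∫_A ∫_B |x-y|^{-(n+s)} dy dx`. -/
noncomputable def interL (n : ℕ) (s : ℝ) (A B : Set (EuclideanSpace ℝ (Fin n))) : ℝ≥0∞ :=
  ∫⁻ x in A, ∫⁻ y in B, fracKer n s x y

/-- The local part of the `s`-fractional perimeter of `E` in `Ω`. -/
noncomputable def perL (n : ℕ) (s : ℝ) (E Ω : Set (EuclideanSpace ℝ (Fin n))) : ℝ≥0∞ :=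
  interL n s (E ∩ Ω) (Eᶜ ∩ Ω)

/-- The nonlocal part of the `s`-fractional perimeter of `E` in `Ω`. -/
noncomputable def perNL (n : ℕ) (s : ℝ) (E Ω : Set (EuclideanSpace ℝ (Fin n))) : ℝ≥0∞ :=
  interL n s (E ∩ Ω) (Eᶜ \ Ω) + interL n s (E \ Ω) (Eᶜ ∩ Ω)

/-- The `s`-fractional perimeter of `E` in `Ω`. -/
noncomputable def per (n : ℕ) (s : ℝ) (E Ω : Set (EuclideanSpace ℝ (Fin n))) : ℝ≥0∞ :=
  interL n s (E ∩ Ω) (Eᶜ ∩ Ω) + interL n s (E ∩ Ω) (Eᶜ \ Ω) + interL n s (E \ Ω) (Eᶜ ∩ Ω)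

/-- The global `s`-fractional perimeter `P_s(E) = L_s(E, Eᶜ)`. -/
noncomputable def perG (n : ℕ) (s : ℝ) (E : Set (EuclideanSpace ℝ (Fin n))) : ℝ≥0∞ :=
  interL n s E Eᶜ

/-- The measure theoretic boundary `∂⁻E`. Note `volume (ball x r) = ω_n rⁿ`. -/
def mtb (n : ℕ) (E : Set (EuclideanSpace ℝ (Fin n))) : Set (EuclideanSpace ℝ (Fin n)) :=
  {x | ∀ r > (0 : ℝ), 0 < volume (E ∩ ball x r) ∧ volume (E ∩ ball x r) < volume (ball x r)}

/-- `E` has locally finite `s`-perimeter: finite `s`-perimeter in every bounded open set. -/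
def locFinPer (n : ℕ) (s : ℝ) (E : Set (EuclideanSpace ℝ (Fin n))) : Prop :=
  ∀ Ω : Set (EuclideanSpace ℝ (Fin n)), IsOpen Ω → IsBounded Ω → per n s E Ω < ⊤

/-- The distance between two sets: `inf {dist x y : x ∈ A, y ∈ B}`. -/
noncomputable def setDist (n : ℕ) (A B : Set (EuclideanSpace ℝ (Fin n))) : ℝ :=
  sInf {d : ℝ | ∃ x ∈ A, ∃ y ∈ B, d = dist x y}

/-!
Split `E ∩ Ω` according to whether a point lies in `Ā`, and `Eᶜ ∖ Ω` according to whether it lies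
in `D`. A point of `Ā` and a point outside `Ω` are at distance `≥ d`, since the segment joining them
crosses `∂Ω`; so are a point of `Ω` and a point outside `D`, since the segment crosses `∂D` outside
`Ω` and, before that, `∂Ω`. The one remaining pair of pieces lies in `T = D ∖ Ā` and contributes at
most `P_s^L(E,T)`, while each far pair contributes at most
`|Ω| ∫_{|z| ≥ d} |z|^{-(n+s)} dz = (n ω_n / s) |Ω| d^{-s}`. The other half of `P_s^{NL}` is treated
in the same way with `E` and `Eᶜ` exchanged.
-/

theorem IsPreconnected.inter_frontier_nonempty {X : Type*} [TopologicalSpace X] {s t : Set X}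
    (hs : IsPreconnected s) (hst : (s ∩ t).Nonempty) (hst' : (s \ t).Nonempty) :
    (s ∩ frontier t).Nonempty := by
  by_contra h
  have hfr : ∀ z ∈ s, z ∉ frontier t := fun z hz hzt => h ⟨z, hz, hzt⟩
  obtain ⟨x, hxs, hxt⟩ := hst
  obtain ⟨y, hys, hyt⟩ := hst'
  have hcover : s ⊆ interior t ∪ (closure t)ᶜ := by
    intro z hz
    by_cases hzc : z ∈ closure t
    · exact Or.inl (by_contra fun hzi => hfr z hz ⟨hzc, hzi⟩)
    · exact Or.inr hzc
  have hx : x ∈ interior t := by_contra fun hxi => hfr x hxs ⟨subset_closure hxt, hxi⟩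
  have hy : y ∉ closure t := fun hyc => hfr y hys ⟨hyc, fun hyi => hyt (interior_subset hyi)⟩
  obtain ⟨z, -, hzi, hzc⟩ := hs _ _ isOpen_interior isClosed_closure.isOpen_compl hcover
    ⟨x, hxs, hx⟩ ⟨y, hys, hy⟩
  exact hzc (interior_subset_closure hzi)

theorem exists_mem_frontier_dist_add_dist_eq {E : Type*} [SeminormedAddCommGroup E]
    [NormedSpace ℝ E] {U : Set E} {x y : E} (hx : x ∈ U) (hy : y ∉ U) :
    ∃ z ∈ frontier U, dist x z + dist z y = dist x y := by
  obtain ⟨z, hz, hzU⟩ := (convex_segment x y).isPreconnected.inter_frontier_nonempty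
    ⟨x, left_mem_segment ℝ x y, hx⟩ ⟨y, right_mem_segment ℝ x y, hy⟩
  exact ⟨z, hzU, dist_add_dist_of_mem_segment hz⟩

theorem integrableOn_and_setIntegral_Ioi_pow_smul_indicator_rpow {n : ℕ} (hn : 1 ≤ n)
    {s d : ℝ} (hs : 0 < s) (hd : 0 < d) :
    IntegrableOn (fun r : ℝ => r ^ (n - 1) • (Ici d).indicator (fun r => r ^ (-((n : ℝ) + s))) r)
        (Ioi 0) ∧
      ∫ r in Ioi (0 : ℝ), r ^ (n - 1) • (Ici d).indicator (fun r => r ^ (-((n : ℝ) + s))) r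
        = d ^ (-s) / s := by
  have heq : EqOn (fun r : ℝ => r ^ (n - 1) • (Ici d).indicator (fun r => r ^ (-((n : ℝ) + s))) r)
      ((Ici d).indicator fun r => r ^ (-s - 1)) (Ioi 0) := by
    intro r (hr : 0 < r)
    by_cases hrd : r ∈ Ici d
    · simp only [indicator_of_mem hrd, smul_eq_mul]
      rw [← Real.rpow_natCast, ← Real.rpow_add hr, Nat.cast_sub hn]
      ring_nf
    · simp [indicator_of_notMem hrd]
  have hsub : Ici d ⊆ Ioi (0 : ℝ) := Ici_subset_Ioi.mpr hd
  have hint : IntegrableOn (fun r : ℝ => r ^ (-s - 1)) (Ici d) :=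
    (integrableOn_Ici_iff_integrableOn_Ioi).mpr (integrableOn_Ioi_rpow_of_lt (by linarith) hd)
  refine ⟨?_, ?_⟩
  · rw [integrableOn_congr_fun heq measurableSet_Ioi, IntegrableOn,
      integrable_indicator_iff measurableSet_Ici, IntegrableOn,
      Measure.restrict_restrict measurableSet_Ici, inter_eq_left.mpr hsub]
    exact hint
  · rw [setIntegral_congr_fun measurableSet_Ioi heq, integral_indicator measurableSet_Ici,
      Measure.restrict_restrict measurableSet_Ici, inter_eq_left.mpr hsub,
      integral_Ici_eq_integral_Ioi, integral_Ioi_rpow_of_lt (by linarith) hd, sub_add_cancel]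
    field_simp

/-- In polar coordinates the tail integral becomes `n ω_n ∫_d^∞ r^{n-1} r^{-(n+s)} dr`. -/
theorem lintegral_compl_ball_norm_sub_rpow {E : Type*} [NormedAddCommGroup E] [NormedSpace ℝ E]
    [FiniteDimensional ℝ E] [MeasurableSpace E] [BorelSpace E] [Nontrivial E]
    (μ : Measure E) [μ.IsAddHaarMeasure] {s d : ℝ} (hs : 0 < s) (hd : 0 < d) (x : E) :
    ∫⁻ y in (ball x d)ᶜ, ENNReal.ofReal (‖x - y‖ ^ (-((Module.finrank ℝ E : ℝ) + s))) ∂μ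
      = Module.finrank ℝ E * μ (ball 0 1) / ENNReal.ofReal s * ENNReal.ofReal (d ^ (-s)) := by
  set n := Module.finrank ℝ E
  set g : ℝ → ℝ := (Ici d).indicator fun r => r ^ (-((n : ℝ) + s))
  obtain ⟨hint, hval⟩ := integrableOn_and_setIntegral_Ioi_pow_smul_indicator_rpow
    (Module.finrank_pos (R := ℝ) (M := E)) hs hd
  have hg : Integrable (fun y => g ‖y‖) μ := (integrable_fun_norm_addHaar μ).mpr hint
  have hg0 : ∀ r, 0 ≤ g r := fun r =>
    indicator_nonneg (fun r (hr : d ≤ r) => Real.rpow_nonneg (hd.le.trans hr) _) r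
  calc ∫⁻ y in (ball x d)ᶜ, ENNReal.ofReal (‖x - y‖ ^ (-((n : ℝ) + s))) ∂μ
      = ∫⁻ y, ENNReal.ofReal (g ‖y - x‖) ∂μ := by
        rw [← lintegral_indicator measurableSet_ball.compl]
        congr 1 with y
        by_cases hy : y ∈ (ball x d)ᶜ
        · have : ‖y - x‖ ∈ Ici d := by simpa [dist_eq_norm] using hy
          rw [indicator_of_mem hy, show g ‖y - x‖ = _ from indicator_of_mem this _, norm_sub_rev]
        · have : ‖y - x‖ ∉ Ici d := by simpa [dist_eq_norm] using hy
          rw [indicator_of_notMem hy, show g ‖y - x‖ = 0 from indicator_of_notMem this _,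
            ENNReal.ofReal_zero]
    _ = ∫⁻ y, ENNReal.ofReal (g ‖y‖) ∂μ :=
        lintegral_sub_right_eq_self (fun y => ENNReal.ofReal (g ‖y‖)) x
    _ = ENNReal.ofReal (∫ y, g ‖y‖ ∂μ) :=
        (ofReal_integral_eq_lintegral_ofReal hg (ae_of_all _ fun y => hg0 _)).symm
    _ = ENNReal.ofReal (n * μ.real (ball 0 1) * (d ^ (-s) / s)) := by
        rw [integral_fun_norm_addHaar μ g, hval, nsmul_eq_mul, smul_eq_mul, mul_assoc]
    _ = n * μ (ball 0 1) / ENNReal.ofReal s * ENNReal.ofReal (d ^ (-s)) := by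
        rw [ENNReal.ofReal_mul (by positivity), ENNReal.ofReal_mul (by positivity),
          ENNReal.ofReal_div_of_pos hs, ENNReal.ofReal_natCast, measureReal_def,
          ENNReal.ofReal_toReal measure_ball_lt_top.ne, ENNReal.div_eq_inv_mul,
          ENNReal.div_eq_inv_mul]
        ring

section Interaction

variable {n : ℕ} {s : ℝ}

theorem fracKer_comm (x y : EuclideanSpace ℝ (Fin n)) : fracKer n s x y = fracKer n s y x := by
  rw [fracKer, fracKer, norm_sub_rev]

theorem measurable_fracKer : Measurable (Function.uncurry (fracKer n s)) := by
  unfold fracKer Function.uncurry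
  fun_prop

theorem interL_mono {A B A' B' : Set (EuclideanSpace ℝ (Fin n))} (hA : A ⊆ A') (hB : B ⊆ B') :
    interL n s A B ≤ interL n s A' B' :=
  lintegral_mono' (Measure.restrict_mono hA le_rfl)
    fun _ => lintegral_mono' (Measure.restrict_mono hB le_rfl) le_rfl

theorem interL_union_left_le (A₁ A₂ B : Set (EuclideanSpace ℝ (Fin n))) :
    interL n s (A₁ ∪ A₂) B ≤ interL n s A₁ B + interL n s A₂ B :=
  lintegral_union_le _ _ _

theorem interL_union_right_le (A B₁ B₂ : Set (EuclideanSpace ℝ (Fin n))) :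
    interL n s A (B₁ ∪ B₂) ≤ interL n s A B₁ + interL n s A B₂ :=
  calc interL n s A (B₁ ∪ B₂)
      ≤ ∫⁻ x in A, ((∫⁻ y in B₁, fracKer n s x y) + ∫⁻ y in B₂, fracKer n s x y) :=
        lintegral_mono fun _ => lintegral_union_le _ _ _
    _ = interL n s A B₁ + interL n s A B₂ :=
        lintegral_add_left measurable_fracKer.lintegral_prod_right _

theorem interL_comm (A B : Set (EuclideanSpace ℝ (Fin n))) : interL n s A B = interL n s B A := by
  rw [interL, lintegral_lintegral_swap measurable_fracKer.aemeasurable]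
  exact lintegral_congr fun y => lintegral_congr fun x => fracKer_comm x y

theorem interL_inter_diff_le {C Ω D : Set (EuclideanSpace ℝ (Fin n))} (hCΩ : C ⊆ Ω)
    (hΩD : Ω ⊆ D) (F G : Set (EuclideanSpace ℝ (Fin n))) :
    interL n s (F ∩ Ω) (G \ Ω) ≤
      interL n s (F ∩ (D \ C)) (G ∩ (D \ C)) + interL n s (F ∩ Ω ∩ C) (G \ Ω) +
        interL n s (F ∩ Ω) (G \ D) := by
  have hnear : interL n s ((F ∩ Ω) \ C) ((G \ Ω) ∩ D) ≤ interL n s (F ∩ (D \ C)) (G ∩ (D \ C)) :=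
    interL_mono (fun x ⟨⟨hxF, hxΩ⟩, hxC⟩ => ⟨hxF, hΩD hxΩ, hxC⟩)
      (fun y ⟨⟨hyG, hyΩ⟩, hyD⟩ => ⟨hyG, hyD, fun hyC => hyΩ (hCΩ hyC)⟩)
  calc interL n s (F ∩ Ω) (G \ Ω)
      ≤ interL n s (F ∩ Ω) ((G \ Ω) ∩ D) + interL n s (F ∩ Ω) ((G \ Ω) \ D) := by
        simpa only [inter_union_sdiff] using
          interL_union_right_le (F ∩ Ω) ((G \ Ω) ∩ D) ((G \ Ω) \ D)
    _ ≤ interL n s ((F ∩ Ω) \ C) ((G \ Ω) ∩ D) + interL n s (F ∩ Ω ∩ C) ((G \ Ω) ∩ D) +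
          interL n s (F ∩ Ω) ((G \ Ω) \ D) := by
        gcongr
        simpa only [sdiff_union_inter] using interL_union_left_le ((F ∩ Ω) \ C) (F ∩ Ω ∩ C) _
    _ ≤ _ := by
        gcongr
        · exact interL_mono le_rfl inter_subset_left
        · exact interL_mono le_rfl (sdiff_subset_sdiff_left sdiff_subset)

theorem interL_le_of_le_dist (hn : 1 ≤ n) (hs : 0 < s)
    {X Y : Set (EuclideanSpace ℝ (Fin n))} (hX : MeasurableSet X) {d : ℝ} (hd : 0 < d)
    (hXY : ∀ x ∈ X, ∀ y ∈ Y, d ≤ dist x y) :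
    interL n s X Y ≤
      n * volume (ball (0 : EuclideanSpace ℝ (Fin n)) 1) / ENNReal.ofReal s *
        ENNReal.ofReal (d ^ (-s)) * volume X := by
  have : Nonempty (Fin n) := ⟨⟨0, hn⟩⟩
  have htail := lintegral_compl_ball_norm_sub_rpow
    (volume : Measure (EuclideanSpace ℝ (Fin n))) hs hd
  simp only [finrank_euclideanSpace_fin] at htail
  rw [interL, ← setLIntegral_const]
  refine setLIntegral_mono' hX fun x hx => ?_
  rw [← htail x]
  refine lintegral_mono' (Measure.restrict_mono (fun y hy => ?_) le_rfl) le_rfl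
  simpa [dist_comm] using hXY x hx y hy

end Interaction

section Distance

variable {n : ℕ} {A B : Set (EuclideanSpace ℝ (Fin n))}

theorem setDist_le_dist {x y : EuclideanSpace ℝ (Fin n)} (hx : x ∈ A) (hy : y ∈ B) :
    setDist n A B ≤ dist x y :=
  csInf_le ⟨0, by rintro r ⟨x, -, y, -, rfl⟩; exact dist_nonneg⟩ ⟨x, hx, y, hy, rfl⟩

theorem setDist_le_dist_of_mem_closure {x y : EuclideanSpace ℝ (Fin n)} (hx : x ∈ closure A)
    (hy : y ∈ B) : setDist n A B ≤ dist x y :=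
  closure_minimal (fun _ ha => setDist_le_dist ha hy)
    (isClosed_le continuous_const (continuous_id.dist continuous_const)) hx

theorem setDist_frontier_le_dist {Ω : Set (EuclideanSpace ℝ (Fin n))} (hAΩ : closure A ⊆ Ω)
    {x y : EuclideanSpace ℝ (Fin n)} (hx : x ∈ closure A) (hy : y ∉ Ω) :
    setDist n A (frontier Ω) ≤ dist x y := by
  obtain ⟨z, hz, hxzy⟩ := exists_mem_frontier_dist_add_dist_eq (hAΩ hx) hy
  linarith [setDist_le_dist_of_mem_closure hx hz, dist_nonneg (x := z) (y := y)]

theorem setDist_frontier_frontier_le_dist {Ω D : Set (EuclideanSpace ℝ (Fin n))} (hDo : IsOpen D)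
    (hΩD : Ω ⊆ D) {x y : EuclideanSpace ℝ (Fin n)} (hx : x ∈ Ω) (hy : y ∉ D) :
    setDist n (frontier D) (frontier Ω) ≤ dist x y := by
  obtain ⟨b, hb, hxby⟩ := exists_mem_frontier_dist_add_dist_eq (hΩD hx) hy
  have hbΩ : b ∉ Ω := fun hbΩ => hDo.inter_frontier_eq.subset ⟨hΩD hbΩ, hb⟩
  obtain ⟨z, hz, hxzb⟩ := exists_mem_frontier_dist_add_dist_eq hx hbΩ
  have := setDist_le_dist hb hz
  rw [dist_comm] at this
  linarith [dist_nonneg (x := x) (y := z), dist_nonneg (x := b) (y := y)]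

end Distance

theorem interL_inter_diff_le_tube {n : ℕ} (hn : 1 ≤ n) {s : ℝ} (hs : 0 < s)
    {Ω A D : Set (EuclideanSpace ℝ (Fin n))} (hΩ : MeasurableSet Ω) (hDo : IsOpen D)
    (hAΩ : closure A ⊆ Ω) (hΩD : Ω ⊆ D) {d : ℝ} (hd : 0 < d)
    (hdA : d ≤ setDist n A (frontier Ω)) (hdD : d ≤ setDist n (frontier D) (frontier Ω))
    {F : Set (EuclideanSpace ℝ (Fin n))} (hF : MeasurableSet F)
    (G : Set (EuclideanSpace ℝ (Fin n))) :
    interL n s (F ∩ Ω) (G \ Ω) ≤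
      interL n s (F ∩ (D \ closure A)) (G ∩ (D \ closure A)) +
        2 * (n * volume (ball (0 : EuclideanSpace ℝ (Fin n)) 1) / ENNReal.ofReal s *
          ENNReal.ofReal (d ^ (-s)) * volume Ω) := by
  set K := (n : ℝ≥0∞) * volume (ball (0 : EuclideanSpace ℝ (Fin n)) 1) / ENNReal.ofReal s *
    ENNReal.ofReal (d ^ (-s))
  have hFΩ := hF.inter hΩ
  have hvol : ∀ X ⊆ Ω, K * volume X ≤ K * volume Ω := fun X hX => by gcongr
  have hfarA : interL n s (F ∩ Ω ∩ closure A) (G \ Ω) ≤ K * volume Ω :=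
    (interL_le_of_le_dist hn hs (hFΩ.inter isClosed_closure.measurableSet) hd
      fun x hx y hy => hdA.trans (setDist_frontier_le_dist hAΩ hx.2 hy.2)).trans
      (hvol _ fun x hx => hx.1.2)
  have hfarD : interL n s (F ∩ Ω) (G \ D) ≤ K * volume Ω :=
    (interL_le_of_le_dist hn hs hFΩ hd fun x hx y (hy : y ∈ G \ D) =>
      hdD.trans (setDist_frontier_frontier_le_dist hDo hΩD hx.2 hy.2)).trans
      (hvol _ inter_subset_right)
  calc interL n s (F ∩ Ω) (G \ Ω)
      ≤ interL n s (F ∩ (D \ closure A)) (G ∩ (D \ closure A)) + K * volume Ω + K * volume Ω :=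
        (interL_inter_diff_le hAΩ hΩD F G).trans (by gcongr)
    _ = _ := by ring

theorem perNL_le_perL_tube_general (n : ℕ) (hn : 1 ≤ n) (s : ℝ) (hs : s ∈ Set.Ioo (0 : ℝ) 1)
    (Ω A D : Set (EuclideanSpace ℝ (Fin n))) (hΩo : IsOpen Ω) (hDo : IsOpen D)
    (hAΩ : closure A ⊆ Ω) (hΩD : closure Ω ⊆ D)
    (hd : 0 < min (setDist n A (frontier Ω)) (setDist n (frontier D) (frontier Ω)))
    (E : Set (EuclideanSpace ℝ (Fin n))) (hE : MeasurableSet E) :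
    perNL n s E Ω ≤
      2 * perL n s E (D \ closure A) +
        4 * ((n : ℝ≥0∞) * volume (ball (0 : EuclideanSpace ℝ (Fin n)) 1) /
              ENNReal.ofReal s) * volume Ω *
          ENNReal.ofReal
            ((min (setDist n A (frontier Ω)) (setDist n (frontier D) (frontier Ω))) ^ (-s)) := by
  have hside := fun {F} (hF : MeasurableSet F) G =>
    interL_inter_diff_le_tube hn hs.1 hΩo.measurableSet hDo hAΩ (subset_closure.trans hΩD) hd
      (min_le_left _ _) (min_le_right _ _) (s := s) hF G
  calc perNL n s E Ω = interL n s (E ∩ Ω) (Eᶜ \ Ω) + interL n s (Eᶜ ∩ Ω) (E \ Ω) := by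
        rw [perNL, interL_comm (E \ Ω)]
    _ ≤ _ := by
        refine (add_le_add (hside hE Eᶜ) (hside hE.compl E)).trans_eq ?_
        rw [interL_comm (Eᶜ ∩ _), ← perL]
        ring

/-- If `A, D` are open sets with `Ā ⊆ Ω`, `Ω̄ ⊆ D` and
`d := min(dist(A,∂Ω), dist(∂D,∂Ω)) > 0`, then for `T := D ∖ Ā` one has
`P_s^{NL}(E,Ω) ≤ 2 P_s^L(E,T) + 4 (n ω_n / s) |Ω| d^{-s}`. -/
theorem perNL_le_perL_tube (n : ℕ) (hn : 1 ≤ n) (s : ℝ) (hs : s ∈ Set.Ioo (0 : ℝ) 1)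
    (Ω A D : Set (EuclideanSpace ℝ (Fin n))) (hΩo : IsOpen Ω) (hΩb : IsBounded Ω)
    (hAo : IsOpen A) (hDo : IsOpen D) (hAne : A.Nonempty)
    (hAΩ : closure A ⊆ Ω) (hΩD : closure Ω ⊆ D)
    (hd : 0 < min (setDist n A (frontier Ω)) (setDist n (frontier D) (frontier Ω)))
    (E : Set (EuclideanSpace ℝ (Fin n))) (hE : MeasurableSet E) :
    perNL n s E Ω ≤
      2 * perL n s E (D \ closure A) +
        4 * ((n : ℝ≥0∞) * volume (ball (0 : EuclideanSpace ℝ (Fin n)) 1) /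
              ENNReal.ofReal s) * volume Ω *
          ENNReal.ofReal
            ((min (setDist n A (frontier Ω)) (setDist n (frontier D) (frontier Ω))) ^ (-s)) :=
  perNL_le_perL_tube_general n hn s hs Ω A D hΩo hDo hAΩ hΩD hd E hE
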